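/- arXiv:2208.00536 — 7 statements merged into one kernel-verified Lean document; each statement's English description precedes it below -/
import Mathlib

section
/- (Bekić principle, least fixed points.) Let A₁ and A₂ be complete lattices and let f₁ : A₁ × A₂ → A₁ and f₂ : A₁ × A₂ → A₂ be monotone (with respect to the product order). Then the least fixed point of the monotone map F : A₁ × A₂ → A₁ × A₂ given by F(x₁,x₂) = (f₁(x₁,x₂), f₂(x₁,x₂)) equals the pair ( lfp (x₁ ↦ f₁(x₁, lfp (x₂ ↦ f₂(x₁,x₂)))), lfp (x₂ ↦ f₂(lfp (x₁ ↦ f₁(x₁,x₂)), x₂)) ), where all the displayed single-variable maps are monotone and lfp denotes the least fixed point given by the Knaster–Tarski theorem. -/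
/-!
Put `a := lfp (bekicFst f₁ f₂)` and `b := lfp (x₂ ↦ f₂ (a, x₂))`. Then `(a, b)` is a fixed point
of `F`, and it lies below every pre-fixed point `x` of `F`: there `lfp (x₂ ↦ f₂ (x.1, x₂)) ≤ x.2`,
hence `bekicFst f₁ f₂ x.1 ≤ f₁ x ≤ x.1`, so `a ≤ x.1` and then `b ≤ x.2`. This identifies the
first component of `lfp F`. The second is the first component for the swapped system, because
the rolling rule `g (lfp (h ∘ g)) = lfp (g ∘ h)` carries `lfp F` to the swapped least fixed point.
-/

section Bekic

variable {A₁ A₂ : Type*} [CompleteLattice A₁] [CompleteLattice A₂]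

/-- The monotone map `F (x₁, x₂) = (f₁ (x₁, x₂), f₂ (x₁, x₂))` on the product lattice. -/
def pairHom (f₁ : A₁ × A₂ →o A₁) (f₂ : A₁ × A₂ →o A₂) : A₁ × A₂ →o A₁ × A₂ :=
  ⟨fun p => (f₁ p, f₂ p), fun _ _ h => ⟨f₁.mono h, f₂.mono h⟩⟩

/-- For fixed `x₁`, the monotone map `x₂ ↦ f₂ (x₁, x₂)`. -/
def secHom₂ (f₂ : A₁ × A₂ →o A₂) (x₁ : A₁) : A₂ →o A₂ :=
  ⟨fun x₂ => f₂ (x₁, x₂), fun _ _ h => f₂.mono ⟨le_rfl, h⟩⟩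

/-- For fixed `x₂`, the monotone map `x₁ ↦ f₁ (x₁, x₂)`. -/
def secHom₁ (f₁ : A₁ × A₂ →o A₁) (x₂ : A₂) : A₁ →o A₁ :=
  ⟨fun x₁ => f₁ (x₁, x₂), fun _ _ h => f₁.mono ⟨h, le_rfl⟩⟩

/-- The monotone map `x₁ ↦ f₁ (x₁, lfp (x₂ ↦ f₂ (x₁, x₂)))`. -/
def bekicFst (f₁ : A₁ × A₂ →o A₁) (f₂ : A₁ × A₂ →o A₂) : A₁ →o A₁ :=
  ⟨fun x₁ => f₁ (x₁, OrderHom.lfp (secHom₂ f₂ x₁)), by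
    intro a b h
    exact f₁.mono ⟨h, OrderHom.lfp.mono (fun x₂ => f₂.mono ⟨h, le_rfl⟩)⟩⟩

/-- The monotone map `x₂ ↦ f₂ (lfp (x₁ ↦ f₁ (x₁, x₂)), x₂)`. -/
def bekicSnd (f₁ : A₁ × A₂ →o A₁) (f₂ : A₁ × A₂ →o A₂) : A₂ →o A₂ :=
  ⟨fun x₂ => f₂ (OrderHom.lfp (secHom₁ f₁ x₂), x₂), by
    intro a b h
    exact f₂.mono ⟨OrderHom.lfp.mono (fun x₁ => f₁.mono ⟨le_rfl, h⟩), h⟩⟩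

section

open OrderHom (lfp lfp_le le_lfp)

def swapHom : A₁ × A₂ →o A₂ × A₁ := ⟨Prod.swap, fun _ _ => Prod.swap_le_swap.2⟩

variable (f₁ : A₁ × A₂ →o A₁) (f₂ : A₁ × A₂ →o A₂)

theorem lfp_secHom₂_le_snd {x : A₁ × A₂} (hx : pairHom f₁ f₂ x ≤ x) :
    lfp (secHom₂ f₂ x.1) ≤ x.2 :=
  lfp_le _ hx.2

theorem lfp_bekicFst_le_fst {x : A₁ × A₂} (hx : pairHom f₁ f₂ x ≤ x) :
    lfp (bekicFst f₁ f₂) ≤ x.1 :=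
  lfp_le _ <| calc
    bekicFst f₁ f₂ x.1 = f₁ (x.1, lfp (secHom₂ f₂ x.1)) := rfl
    _ ≤ f₁ x := f₁.mono ⟨le_rfl, lfp_secHom₂_le_snd f₁ f₂ hx⟩
    _ ≤ x.1 := hx.1

theorem lfp_pairHom_eq :
    lfp (pairHom f₁ f₂) =
      (lfp (bekicFst f₁ f₂), lfp (secHom₂ f₂ (lfp (bekicFst f₁ f₂)))) := by
  refine le_antisymm (lfp_le _ (Prod.ext ?_ ?_).le) (le_lfp _ fun x hx => ?_)
  · exact (bekicFst f₁ f₂).map_lfp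
  · exact (secHom₂ f₂ _).map_lfp
  · have ha := lfp_bekicFst_le_fst f₁ f₂ hx
    have hsec : secHom₂ f₂ (lfp (bekicFst f₁ f₂)) ≤ secHom₂ f₂ x.1 :=
      fun _ => f₂.mono ⟨ha, le_rfl⟩
    exact ⟨ha, (lfp.mono hsec).trans (lfp_secHom₂_le_snd f₁ f₂ hx)⟩

theorem bekicSnd_eq_bekicFst_comp_swap :
    bekicSnd f₁ f₂ = bekicFst (f₂.comp swapHom) (f₁.comp swapHom) := rfl

theorem lfp_pairHom_comp_swap :
    lfp (pairHom (f₂.comp swapHom) (f₁.comp swapHom)) = (lfp (pairHom f₁ f₂)).swap :=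
  (OrderHom.map_lfp_comp (swapHom : A₁ × A₂ →o A₂ × A₁) ((pairHom f₁ f₂).comp swapHom)).symm

theorem fst_lfp_pairHom : (lfp (pairHom f₁ f₂)).1 = lfp (bekicFst f₁ f₂) := by
  rw [lfp_pairHom_eq]

theorem snd_lfp_pairHom : (lfp (pairHom f₁ f₂)).2 = lfp (bekicSnd f₁ f₂) := by
  rw [bekicSnd_eq_bekicFst_comp_swap, ← fst_lfp_pairHom, lfp_pairHom_comp_swap, Prod.fst_swap]

end

/-- **Bekić principle** for least fixed points. -/
theorem bekic_lfp (f₁ : A₁ × A₂ →o A₁) (f₂ : A₁ × A₂ →o A₂) :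
    OrderHom.lfp (pairHom f₁ f₂) =
      (OrderHom.lfp (bekicFst f₁ f₂), OrderHom.lfp (bekicSnd f₁ f₂)) :=
  Prod.ext (fst_lfp_pairHom f₁ f₂) (snd_lfp_pairHom f₁ f₂)

end Bekic
end

section
/- Let M be a type, R a binary relation on M, and F : Set M → Set M the diamond operator F(H) = {m | ∃ n, R m n ∧ n ∈ H}. Then for every natural number k, the k-fold iterate F^[k](Set.univ) equals the set of points from which there is an R-path of length k: F^[k](Set.univ) = {m | ∃ f : ℕ → M, f 0 = m ∧ ∀ i < k, R (f i) (f (i+1))}. -/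
/-- For the diamond operator `F H = {m | ∃ n, R m n ∧ n ∈ H}`, the `k`-fold iterate
applied to the full set is the set of points from which there is an `R`-path of
length `k`. -/
theorem diamond_iterate_univ {M : Type*} (R : M → M → Prop) (k : ℕ) :
    (fun H : Set M => {m | ∃ n, R m n ∧ n ∈ H})^[k] Set.univ =
      {m | ∃ f : ℕ → M, f 0 = m ∧ ∀ i < k, R (f i) (f (i + 1))} := by
  induction k with
  | zero =>
    ext m
    simp only [Function.iterate_zero, id_eq, Set.mem_univ, Set.mem_setOf_eq, true_iff]
    exact ⟨fun _ => m, rfl, by omega⟩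
  | succ k ih =>
    ext m
    rw [Function.iterate_succ_apply', ih]
    simp only [Set.mem_setOf_eq]
    constructor
    · rintro ⟨n, hmn, f, hf0, hf⟩
      refine ⟨fun i => Nat.casesOn i m f, rfl, ?_⟩
      intro i hi
      cases i with
      | zero => simpa [hf0]
      | succ j => exact hf j (by omega)
    · rintro ⟨f, hf0, hf⟩
      exact ⟨f 1, hf0 ▸ hf 0 (by omega), fun i => f (i + 1), rfl,
        fun i hi => hf (i + 1) (by omega)⟩
end

section
/- Let M be a type, R a binary relation on M, and F : Set M → Set M the diamond operator F(H) = {m | ∃ n, R m n ∧ n ∈ H}. Then the ω-th ν-approximant ⋂_{k ∈ ℕ} F^[k](Set.univ) equals the set of points from which there are arbitrarily long finite R-paths: ⋂_{k ∈ ℕ} F^[k](Set.univ) = {m | ∀ k, ∃ f : ℕ → M, f 0 = m ∧ ∀ i < k, R (f i) (f (i+1))}. -/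
lemma diamond_iter_mem {M : Type*} (R : M → M → Prop) :
    ∀ (k : ℕ) (m : M), m ∈ (fun H : Set M => {m | ∃ n, R m n ∧ n ∈ H})^[k] Set.univ ↔
      ∃ f : ℕ → M, f 0 = m ∧ ∀ i < k, R (f i) (f (i + 1)) := by
  intro k
  induction k with
  | zero => intro m; simp; exact ⟨fun _ => m, rfl⟩
  | succ k ih =>
    intro m
    rw [Function.iterate_succ_apply']
    constructor
    · rintro ⟨n, hmn, hn⟩
      obtain ⟨g, hg0, hg⟩ := (ih n).mp hn
      refine ⟨fun i => if i = 0 then m else g (i - 1), by simp, ?_⟩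
      intro i hi
      match i with
      | 0 => simpa [hg0]
      | j + 1 => simpa using hg j (by omega)
    · rintro ⟨f, hf0, hf⟩
      exact ⟨f 1, hf0 ▸ hf 0 (by omega),
        (ih (f 1)).mpr ⟨fun i => f (i + 1), rfl, fun i hi => hf (i + 1) (by omega)⟩⟩

/-- The ω-th ν-approximant of the diamond operator `F H = {m | ∃ n, R m n ∧ n ∈ H}`
is the set of points from which there are arbitrarily long finite `R`-paths
(the semantics of the countdown formula `ν^ω x.◇x`). -/
theorem diamond_omega_nuApprox {M : Type*} (R : M → M → Prop) :
    (⋂ k : ℕ, (fun H : Set M => {m | ∃ n, R m n ∧ n ∈ H})^[k] Set.univ) =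
      {m | ∀ k : ℕ, ∃ f : ℕ → M, f 0 = m ∧ ∀ i < k, R (f i) (f (i + 1))} := by
  ext m
  simp only [Set.mem_iInter, Set.mem_setOf_eq]
  exact forall_congr' fun k => diamond_iter_mem R k m
end

section
/- For C : Set Ordinal define the monotone operator D_C : Set Ordinal → Set Ordinal by D_C(H) = {α | ∃ β, β < α ∧ β ∈ C ∧ β ∈ H}. Define Φ_k : Set Ordinal → Set Ordinal for k ≥ 1 by recursion: Φ_1(C) = ⋂_{n ∈ ℕ} (D_C)^[n](Set.univ), and Φ_{k+1}(C) = ⋂_{n ∈ ℕ} (H ↦ Φ_k(C ∩ H))^[n](Set.univ). Then for every k ≥ 1, Φ_k(Set.univ) = {α : Ordinal | ω^k ≤ α}. -/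
/-- The operator `D_C H = {α | ∃ β, β < α ∧ β ∈ C ∧ β ∈ H}`, the semantics of
`◇(C ∧ −)` on the ordinal model where `α → β` iff `β < α`. -/
def D (C : Set Ordinal) (H : Set Ordinal) : Set Ordinal :=
  {α | ∃ β, β < α ∧ β ∈ C ∧ β ∈ H}

/-- `Phi k` is the semantics `Φ_k` of `ν^ω x₁ … ν^ω x_k.◇(x₁ ∧ … ∧ x_k ∧ −)`, defined
for `k ≥ 1` by `Φ_1 C = ⋂_n (D_C)^[n] univ` and
`Φ_{k+1} C = ⋂_n (H ↦ Φ_k (C ∩ H))^[n] univ`.  (`Phi 0` is a dummy value.) -/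
def Phi : ℕ → Set Ordinal → Set Ordinal
  | 0, _ => Set.univ
  | 1, C => ⋂ n : ℕ, (D C)^[n] Set.univ
  | (k + 2), C => ⋂ n : ℕ, (fun H => Phi (k + 1) (C ∩ H))^[n] Set.univ

/-! Say that `C ∩ [0, α)` has order type at least `δ` when it contains a strictly increasing
`δ`-sequence. Then `D_C H` is the set of `α` for which `C ∩ H ∩ [0, α)` has order type at
least `1`, and for `δ₂ > 0` a `δ₂`-sequence in `C` whose points each lie above a `δ₁`-sequence in
`C` splices with the `δ₁`-sequence below its first point into a `(δ₁ + δ₂)`-sequence. So the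
`n`-th approximant of `H ↦ {α | C ∩ H ∩ [0, α) has order type ≥ δ}` asks for order type
`≥ δ * n`, and the `ω`-th for order type `≥ δ * ω`. By induction `Φ_k C` asks for order type
`≥ ω ^ k`, which for `C = univ` means `ω ^ k ≤ α`. -/

open Set
open scoped Ordinal

universe u

def HasChainOfType (δ : Ordinal.{u}) (s : Set Ordinal.{u}) : Prop :=
  ∃ f : Ordinal.{u} → Ordinal.{u}, StrictMonoOn f (Iio δ) ∧ MapsTo f (Iio δ) s

theorem hasChainOfType_iff_lift_le_type {δ : Ordinal.{u}} {s : Set Ordinal.{u}} :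
    HasChainOfType δ s ↔ Ordinal.lift.{u + 1} δ ≤ Ordinal.type ((· < ·) : s → s → Prop) := by
  rw [← Ordinal.type_lt_Iio, Ordinal.type_le_iff']
  constructor
  · rintro ⟨f, hf, hfs⟩
    exact ⟨(OrderEmbedding.ofStrictMono (fun x : Iio δ => (⟨f x, hfs x.2⟩ : s))
      fun x y hxy => hf x.2 y.2 hxy).ltEmbedding⟩
  · rintro ⟨e⟩
    have hext : ∀ x : Iio δ, Function.extend Subtype.val (fun x => (e x : Ordinal)) 0 x = e x :=
      Subtype.val_injective.extend_apply _ _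
    refine ⟨Function.extend Subtype.val (fun x => (e x : Ordinal)) 0, ?_, fun x hx => ?_⟩
    · rw [strictMonoOn_iff_strictMono]
      intro x y hxy
      simpa only [hext] using Subtype.coe_lt_coe.2 (e.map_rel_iff.2 hxy)
    · show Function.extend _ _ _ (⟨x, hx⟩ : Iio δ).1 ∈ s
      rw [hext]
      exact (e ⟨x, hx⟩).2

theorem hasChainOfType_zero (s : Set Ordinal) : HasChainOfType 0 s :=
  hasChainOfType_iff_lift_le_type.2 (by simp)

theorem hasChainOfType_one_iff {s : Set Ordinal} : HasChainOfType 1 s ↔ s.Nonempty := by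
  simp only [HasChainOfType, Order.Iio_one, strictMonoOn_singleton, mapsTo_singleton, true_and]
  exact ⟨fun ⟨f, hf⟩ => ⟨f 0, hf⟩, fun ⟨a, ha⟩ => ⟨fun _ => a, ha⟩⟩

theorem hasChainOfType_Iio_iff {δ α : Ordinal} : HasChainOfType δ (Iio α) ↔ δ ≤ α := by
  rw [hasChainOfType_iff_lift_le_type, Ordinal.type_lt_Iio, Ordinal.lift_le]

-- Comparing order types spares us from gluing the `δ * n`-sequences into a `δ * ω`-sequence.
theorem hasChainOfType_mul_omega0_iff {δ : Ordinal} {s : Set Ordinal} :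
    HasChainOfType (δ * ω) s ↔ ∀ n : ℕ, HasChainOfType (δ * n) s := by
  simp only [hasChainOfType_iff_lift_le_type, Ordinal.lift_mul, Ordinal.lift_omega0,
    Ordinal.lift_natCast]
  rw [Ordinal.mul_le_iff_of_isSuccLimit Ordinal.isSuccLimit_omega0]
  simp only [Ordinal.lt_omega0, forall_exists_index, forall_eq_apply_imp_iff]

theorem HasChainOfType.add {δ₁ δ₂ a : Ordinal} {s : Set Ordinal}
    (h₁ : HasChainOfType δ₁ (s ∩ Iio a)) (h₂ : HasChainOfType δ₂ (s ∩ Ici a)) :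
    HasChainOfType (δ₁ + δ₂) s := by
  obtain ⟨g, hg, hgs⟩ := h₁
  obtain ⟨f, hf, hfs⟩ := h₂
  have hsub : ∀ {γ}, γ < δ₁ + δ₂ → ¬γ < δ₁ → γ - δ₁ < δ₂ := fun hγ hγ₁ => by
    rwa [← add_lt_add_iff_left δ₁, Ordinal.add_sub_cancel_of_le (not_lt.1 hγ₁)]
  refine ⟨fun γ => if γ < δ₁ then g γ else f (γ - δ₁), fun x hx y hy hxy => ?_, fun γ hγ => ?_⟩
  · by_cases hx₁ : x < δ₁ <;> by_cases hy₁ : y < δ₁ <;> simp only [hx₁, hy₁, if_true, if_false]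
    · exact hg hx₁ hy₁ hxy
    · exact (hgs hx₁).2.trans_le (hfs (hsub hy hy₁)).2
    · exact absurd (hxy.trans hy₁) hx₁
    · refine hf (hsub hx hx₁) (hsub hy hy₁) ?_
      rwa [← add_lt_add_iff_left δ₁, Ordinal.add_sub_cancel_of_le (not_lt.1 hx₁),
        Ordinal.add_sub_cancel_of_le (not_lt.1 hy₁)]
  · by_cases hγ₁ : γ < δ₁ <;> simp only [hγ₁, if_true, if_false]
    · exact (hgs hγ₁).1
    · exact (hfs (hsub hγ hγ₁)).1

def aboveChain (δ : Ordinal.{u}) (C : Set Ordinal.{u}) : Set Ordinal.{u} :=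
  {α | HasChainOfType δ (C ∩ Iio α)}

theorem aboveChain_zero (C : Set Ordinal) : aboveChain 0 C = univ :=
  eq_univ_of_forall fun _ => hasChainOfType_zero _

theorem aboveChain_univ (δ : Ordinal) : aboveChain δ univ = Ici δ := by
  ext α
  simp only [aboveChain, mem_ofPred_eq, univ_inter, hasChainOfType_Iio_iff, mem_Ici]

theorem D_eq_aboveChain_one (C H : Set Ordinal) : D C H = aboveChain 1 (C ∩ H) := by
  ext α
  simp only [D, aboveChain, mem_ofPred_eq, hasChainOfType_one_iff, Set.Nonempty, mem_inter_iff,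
    mem_Iio]
  exact exists_congr fun β => by tauto

theorem aboveChain_inter_aboveChain {δ₁ δ₂ : Ordinal} (hδ₂ : 0 < δ₂) (C : Set Ordinal) :
    aboveChain δ₂ (C ∩ aboveChain δ₁ C) = aboveChain (δ₁ + δ₂) C := by
  ext α
  constructor
  · rintro ⟨f, hf, hfs⟩
    obtain ⟨⟨-, g, hg, hgs⟩, haα⟩ := hfs (show 0 ∈ Iio δ₂ from hδ₂)
    refine HasChainOfType.add (a := f 0) ⟨g, hg, fun γ hγ => ?_⟩ ⟨f, hf, fun γ hγ => ?_⟩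
    · exact ⟨⟨(hgs hγ).1, mem_Iio.2 ((hgs hγ).2.trans haα)⟩, (hgs hγ).2⟩
    · exact ⟨⟨(hfs hγ).1.1, (hfs hγ).2⟩, hf.monotoneOn hδ₂ hγ zero_le⟩
  · rintro ⟨h, hh, hhs⟩
    have hshift : ∀ {β}, β < δ₂ → δ₁ + β < δ₁ + δ₂ := (add_lt_add_iff_left δ₁).2
    have hinit : ∀ {γ} β, γ < δ₁ → γ < δ₁ + β := fun _ hγ => hγ.trans_le le_self_add
    refine ⟨fun β => h (δ₁ + β), fun x hx y hy hxy => hh (hshift hx) (hshift hy)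
      ((add_lt_add_iff_left δ₁).2 hxy), fun β hβ =>
        ⟨⟨(hhs (hshift hβ)).1, ?_⟩, (hhs (hshift hβ)).2⟩⟩
    exact ⟨h, hh.mono (Iio_subset_Iio le_self_add), fun γ hγ =>
      ⟨(hhs (hinit δ₂ hγ)).1, hh (hinit δ₂ hγ) (hshift hβ) (hinit β hγ)⟩⟩

theorem iInter_iterate_eq_aboveChain_mul_omega0 {δ : Ordinal} (hδ : 0 < δ) {C : Set Ordinal}
    {G : Set Ordinal → Set Ordinal} (hG : ∀ H, G H = aboveChain δ (C ∩ H)) :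
    ⋂ n : ℕ, G^[n] univ = aboveChain (δ * ω) C := by
  have hiterate : ∀ n : ℕ, G^[n] univ = aboveChain (δ * n) C := by
    intro n
    induction n with
    | zero => rw [Function.iterate_zero_apply, Nat.cast_zero, mul_zero, aboveChain_zero]
    | succ n ih =>
      rw [Function.iterate_succ_apply', ih, hG, aboveChain_inter_aboveChain hδ, Nat.cast_succ,
        mul_add_one]
  ext α
  simp only [hiterate, mem_iInter, aboveChain, mem_ofPred_eq, hasChainOfType_mul_omega0_iff]

theorem Phi_succ (k : ℕ) (C : Set Ordinal) :
    Phi (k + 1) C = aboveChain (ω ^ ((k + 1 : ℕ) : Ordinal)) C := by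
  induction k generalizing C with
  | zero =>
    rw [Phi, iInter_iterate_eq_aboveChain_mul_omega0 zero_lt_one (D_eq_aboveChain_one C), one_mul,
      zero_add, Nat.cast_one, Ordinal.opow_one]
  | succ k ih =>
    rw [Phi, iInter_iterate_eq_aboveChain_mul_omega0 (Ordinal.opow_pos _ Ordinal.omega0_pos)
      fun H => ih (C ∩ H), ← Ordinal.opow_succ, Order.succ_eq_add_one,
      Nat.cast_succ (k + 1)]

theorem Phi_univ_eq_omega_pow (k : ℕ) (hk : 1 ≤ k) :
    Phi k Set.univ = {α : Ordinal | Ordinal.omega0 ^ (k : Ordinal) ≤ α} := by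
  obtain ⟨k, rfl⟩ := Nat.exists_eq_add_of_le' hk
  rw [Phi_succ, aboveChain_univ]
  rfl
end

section
/- Let W : ℕ → Bool be an infinite word over the two-letter alphabet {a, b}, with 'true' representing the letter a. Define the monotone operator F : Set ℕ × Set ℕ → Set ℕ × Set ℕ by F(H₁,H₂) = ({n | ∃ m, n ≤ m ∧ m ∈ H₂}, {n | W n = true ∧ n+1 ∈ H₂}). Then for every n ∈ ℕ, n belongs to the first component of ⋂_{k ∈ ℕ} F^[k](Set.univ, Set.univ) (intersections taken componentwise) if and only if for every k there exists m ≥ n such that W (m+j) = true for all j < k, i.e. iff W contains arbitrarily long blocks of consecutive a's. -/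
/-- The one-step semantics of the vectorial countdown formula
`φ = ν^ω_1 (x₁,x₂).(◇_{Γ*} x₂, ◇_a x₂)` on an infinite word `W` (where `true`
represents the letter `a`). -/
def Fop (W : ℕ → Bool) (H : Set ℕ × Set ℕ) : Set ℕ × Set ℕ :=
  ({n | ∃ m, n ≤ m ∧ m ∈ H.2}, {n | W n = true ∧ n + 1 ∈ H.2})

lemma Fop_snd (W : ℕ → Bool) (k n : ℕ) :
    n ∈ ((Fop W)^[k] (Set.univ, Set.univ)).2 ↔ ∀ j < k, W (n + j) = true := by
  induction k generalizing n with
  | zero => simp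
  | succ k ih =>
    rw [Function.iterate_succ_apply']
    constructor
    · rintro ⟨h1, h2⟩ j hj
      rcases Nat.eq_zero_or_pos j with rfl | hp
      · simpa using h1
      · obtain ⟨j', rfl⟩ := Nat.exists_eq_add_of_le hp
        have := (ih (n + 1)).1 h2 j' (by omega)
        simpa [Nat.add_comm, Nat.add_assoc, Nat.add_left_comm] using this
    · intro h
      refine ⟨by simpa using h 0 (Nat.succ_pos k), (ih (n + 1)).2 fun j hj => ?_⟩
      have := h (1 + j) (by omega)
      simpa [Nat.add_assoc] using this

/-- A point `n` satisfies the vectorial formula `ν^ω_1 (x₁,x₂).(◇_{Γ*} x₂, ◇_a x₂)`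
iff the word `W` contains arbitrarily long blocks of consecutive `a`'s starting
at or after `n`. -/
theorem vectorial_unbounded_blocks (W : ℕ → Bool) (n : ℕ) :
    n ∈ ⋂ k : ℕ, ((Fop W)^[k] (Set.univ, Set.univ)).1 ↔
      ∀ k : ℕ, ∃ m, n ≤ m ∧ ∀ j < k, W (m + j) = true := by
  simp only [Set.mem_iInter]
  constructor
  · intro h k
    have := h (k + 1)
    rw [Function.iterate_succ_apply'] at this
    obtain ⟨m, hm, hm2⟩ := this
    exact ⟨m, hm, (Fop_snd W k m).1 hm2⟩
  · intro h k
    cases k with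
    | zero => simp
    | succ k =>
      obtain ⟨m, hm, hm2⟩ := h k
      rw [Function.iterate_succ_apply']
      exact ⟨m, hm, (Fop_snd W k m).2 hm2⟩
end

section
/- (Failure of the Bekić principle for countdown operators.) Let W : ℕ → Bool be an infinite word with 'true' representing the letter a, and assume: (i) W contains arbitrarily long blocks of consecutive a's, i.e. ∀ k, ∃ m, ∀ j < k, W (m+j) = true; and (ii) W contains infinitely many b's, i.e. ∀ n, ∃ m ≥ n, W m = false. Define F : Set ℕ × Set ℕ → Set ℕ × Set ℕ by F(H₁,H₂) = ({n | ∃ m, n ≤ m ∧ m ∈ H₂}, {n | W n = true ∧ n+1 ∈ H₂}). Then the first component of ⋂_{k ∈ ℕ} F^[k](Set.univ, Set.univ) equals Set.univ, while the set {n | ∃ m, n ≤ m ∧ ∀ j, W (m+j) = true} is empty. -/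
lemma Fop_iter_snd (W : ℕ → Bool) (k : ℕ) :
    ((Fop W)^[k] (Set.univ, Set.univ)).2 = {n | ∀ j < k, W (n + j) = true} := by
  induction k with
  | zero => simp
  | succ k ih =>
    rw [Function.iterate_succ_apply']
    ext n
    simp only [Fop, Set.mem_setOf_eq, ih]
    constructor
    · rintro ⟨hw, h⟩ j hj
      rcases j with _ | j
      · simpa using hw
      · have := h j (by omega)
        rwa [show n + 1 + j = n + (j + 1) by omega] at this
    · intro h
      refine ⟨by simpa using h 0 (by omega), fun j hj => ?_⟩
      have := h (j + 1) (by omega)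
      rwa [show n + (j + 1) = n + 1 + j by omega] at this

/-- **Failure of the Bekić principle for countdown operators.** If `W` has
arbitrarily long blocks of consecutive `a`'s but contains infinitely many `b`'s,
then the vectorial formula `ν^ω_1 (x₁,x₂).(◇_{Γ*} x₂, ◇_a x₂)` is true everywhere,
whereas its Bekić-style scalar counterpart `ν^ω x₁.◇_{Γ*}(ν^ω x₂.◇_a x₂)` is false
everywhere. -/
theorem bekic_fails_for_countdown (W : ℕ → Bool)
    (h₁ : ∀ k : ℕ, ∃ m, ∀ j < k, W (m + j) = true)
    (h₂ : ∀ n : ℕ, ∃ m, n ≤ m ∧ W m = false) :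
    (⋂ k : ℕ, ((Fop W)^[k] (Set.univ, Set.univ)).1) = Set.univ ∧
      {n | ∃ m, n ≤ m ∧ ∀ j : ℕ, W (m + j) = true} = (∅ : Set ℕ) := by
  constructor
  · ext n
    simp only [Set.mem_iInter, Set.mem_univ, iff_true]
    intro k
    rcases k with _ | k
    · simp
    · rw [Function.iterate_succ_apply']
      show ∃ m, n ≤ m ∧ m ∈ ((Fop W)^[k] (Set.univ, Set.univ)).2
      rw [Fop_iter_snd]
      obtain ⟨m, hm⟩ := h₁ (n + k)
      refine ⟨max m n, le_max_right _ _, fun j hj => ?_⟩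
      have := hm (max m n - m + j) (by omega)
      rwa [show m + (max m n - m + j) = max m n + j by omega] at this
  · ext n
    simp only [Set.mem_setOf_eq, Set.mem_empty_iff_false, iff_false]
    rintro ⟨m, _, h⟩
    obtain ⟨m', hm', hw⟩ := h₂ m
    have := h (m' - m)
    rw [show m + (m' - m) = m' by omega] at this
    simp [hw] at this
end

section
/- Let Γ be a type (alphabet), σ a finite type (states), and M : DFA Γ σ a deterministic finite automaton with start state M.start, transition-extended evaluation M.evalFrom, and accepting set M.accept. Let w : ℕ → Γ be an infinite word, and for i ≤ j let w[i,j) denote the finite word (list) w i, w (i+1), …, w (j−1). Then the following are equivalent: (1) w contains arbitrarily long infixes accepted by M, i.e. for every k there exist i and j with i + k ≤ j such that M.evalFrom M.start w[i,j) ∈ M.accept; (2) there exists a state q : σ such that for every n there exist positions p₀ < p₁ < … < p_{n+2} with M.evalFrom M.start w[p₀,p₁) = q, M.evalFrom q w[p_l, p_{l+1}) = q for every l with 1 ≤ l ≤ n, and M.evalFrom q w[p_{n+1}, p_{n+2}) ∈ M.accept. -/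
/-- `seg w i j` is the finite infix `w i, w (i+1), …, w (j-1)` of the infinite
word `w`. -/
def seg {Γ : Type*} (w : ℕ → Γ) (i j : ℕ) : List Γ :=
  (List.range (j - i)).map fun t => w (i + t)

lemma seg_append {Γ : Type*} (w : ℕ → Γ) {a b c : ℕ} (hab : a ≤ b) (hbc : b ≤ c) :
    seg w a b ++ seg w b c = seg w a c := by
  unfold seg
  have h : c - a = (b - a) + (c - b) := by omega
  rw [h, List.range_add, List.map_append, List.map_map]
  congr 1
  apply List.map_congr_left
  intro t _
  simp only [Function.comp_apply]
  congr 1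
  omega

lemma seg_self {Γ : Type*} (w : ℕ → Γ) (a : ℕ) : seg w a a = [] := by
  simp [seg]

lemma eval_seg_trans {Γ σ : Type*} (M : DFA Γ σ) (w : ℕ → Γ) {a b c : ℕ}
    (hab : a ≤ b) (hbc : b ≤ c) :
    M.evalFrom (M.evalFrom (M.evalFrom M.start (seg w a b)) (seg w b c)) ([]) =
    M.evalFrom (M.evalFrom M.start (seg w a b)) (seg w b c) := rfl

lemma mono_of_step {p : ℕ → ℕ} {a b : ℕ} (h : ∀ l, a ≤ l → l < b → p l < p (l + 1))
    (hab : a ≤ b) : p a ≤ p b := by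
  induction b, hab using Nat.le_induction with
  | base => exact le_refl _
  | succ b hb ih =>
    have := h b hb (by omega)
    have := ih fun l hl hlb => h l hl (by omega)
    omega

lemma eval_loops {Γ σ : Type*} (M : DFA Γ σ) (w : ℕ → Γ) (q : σ) (p : ℕ → ℕ) {a b : ℕ}
    (hmono : ∀ l, a ≤ l → l < b → p l < p (l + 1))
    (hloop : ∀ l, a ≤ l → l < b → M.evalFrom q (seg w (p l) (p (l + 1))) = q)
    (hab : a ≤ b) :
    M.evalFrom q (seg w (p a) (p b)) = q := by
  induction b, hab using Nat.le_induction with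
  | base => simp [seg_self, DFA.evalFrom]
  | succ b hb ih =>
    have h1 : p a ≤ p b :=
      mono_of_step (fun l hl hlb => hmono l hl (by omega)) hb
    have h2 : p b ≤ p (b + 1) := le_of_lt (hmono b hb (by omega))
    rw [← seg_append w h1 h2, DFA.evalFrom_of_append,
      ih (fun l hl hlb => hmono l hl (by omega)) (fun l hl hlb => hloop l hl (by omega)),
      hloop b hb (by omega)]

/-- An infinite word `w` contains arbitrarily long infixes accepted by the DFA `M`
iff there is a state `q` such that for every `n` one can find positions
`p 0 < p 1 < … < p (n+2)` with `w[p 0, p 1)` leading from the start state to `q`,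
each `w[p l, p (l+1))` (for `1 ≤ l ≤ n`) looping at `q`, and `w[p (n+1), p (n+2))`
leading from `q` to an accepting state. -/
theorem unbounded_infixes_pigeonhole {Γ σ : Type*} [Fintype σ] (M : DFA Γ σ)
    (w : ℕ → Γ) :
    (∀ k : ℕ, ∃ i j : ℕ, i + k ≤ j ∧ M.evalFrom M.start (seg w i j) ∈ M.accept) ↔
      ∃ q : σ, ∀ n : ℕ, ∃ p : ℕ → ℕ,
        (∀ l, l ≤ n + 1 → p l < p (l + 1)) ∧
        M.evalFrom M.start (seg w (p 0) (p 1)) = q ∧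
        (∀ l, 1 ≤ l → l ≤ n → M.evalFrom q (seg w (p l) (p (l + 1))) = q) ∧
        M.evalFrom q (seg w (p (n + 1)) (p (n + 2))) ∈ M.accept := by
  classical
  constructor
  · intro h
    -- For each n, find a state q working for n
    have key : ∀ n : ℕ, ∃ q : σ, ∃ p : ℕ → ℕ,
        (∀ l, l ≤ n + 1 → p l < p (l + 1)) ∧
        M.evalFrom M.start (seg w (p 0) (p 1)) = q ∧
        (∀ l, 1 ≤ l → l ≤ n → M.evalFrom q (seg w (p l) (p (l + 1))) = q) ∧
        M.evalFrom q (seg w (p (n + 1)) (p (n + 2))) ∈ M.accept := by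
      intro n
      obtain ⟨i, j, hij, hacc⟩ := h (Fintype.card σ * n + 2)
      -- states at interior positions
      have hmaps : ∀ m ∈ Finset.Ioo i j,
          M.evalFrom M.start (seg w i m) ∈ (Finset.univ : Finset σ) := fun _ _ =>
        Finset.mem_univ _
      have hcard : (Finset.univ : Finset σ).card * n < (Finset.Ioo i j).card := by
        rw [Nat.card_Ioo, Finset.card_univ]
        omega
      obtain ⟨q, -, hq⟩ :=
        Finset.exists_lt_card_fiber_of_mul_lt_card_of_maps_to hmaps hcard
      obtain ⟨T, hTsub, hT⟩ := Finset.exists_subset_card_eq (n := n + 1) hq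
      refine ⟨q, ?_⟩
      set e := T.orderEmbOfFin hT with he
      have hmemT : ∀ k : Fin (n + 1), e k ∈ T := fun k => T.orderEmbOfFin_mem hT k
      have hmem : ∀ k : Fin (n + 1), e k ∈ Finset.Ioo i j ∧
          M.evalFrom M.start (seg w i (e k)) = q := by
        intro k
        have := hTsub (hmemT k)
        rw [Finset.mem_filter] at this
        exact this
      -- define p
      set p : ℕ → ℕ := fun l =>
        if l = 0 then i else if hl : l ≤ n + 1 then e ⟨l - 1, by omega⟩ else j with hp
      have hp0 : p 0 = i := rfl
      have hpmid : ∀ (l : ℕ) (h1 : 1 ≤ l) (h2 : l ≤ n + 1), p l = e ⟨l - 1, by omega⟩ := by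
        intro l h1 h2
        simp only [hp]
        rw [if_neg (by omega), dif_pos h2]
      have hplast : ∀ l, n + 2 ≤ l → p l = j := by
        intro l hl
        simp only [hp]
        rw [if_neg (by omega), dif_neg (by omega)]
      have hmono : ∀ l, l ≤ n + 1 → p l < p (l + 1) := by
        intro l hl
        rcases Nat.eq_zero_or_pos l with h0 | h0
        · subst h0
          rw [hp0, hpmid 1 (by omega) (by omega)]
          exact (Finset.mem_Ioo.mp (hmem _).1).1
        · rcases Nat.lt_or_ge l (n + 1) with hl2 | hl2
          · rw [hpmid l h0 (by omega), hpmid (l + 1) (by omega) (by omega)]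
            exact (T.orderEmbOfFin hT).strictMono (by simp [Fin.lt_def]; omega)
          · have : l = n + 1 := by omega
            subst this
            rw [hpmid (n + 1) (by omega) le_rfl, hplast (n + 2) le_rfl]
            exact (Finset.mem_Ioo.mp (hmem _).1).2
      have hmono' : ∀ a b, a ≤ b → b ≤ n + 2 → p a ≤ p b := by
        intro a b hab hb
        exact mono_of_step (fun l hl hlb => hmono l (by omega)) hab
      have heval : ∀ l, 1 ≤ l → l ≤ n + 1 →
          M.evalFrom M.start (seg w i (p l)) = q := by
        intro l h1 h2
        rw [hpmid l h1 h2]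
        exact (hmem _).2
      refine ⟨p, hmono, ?_, ?_, ?_⟩
      · rw [hp0]; exact heval 1 le_rfl (by omega)
      · intro l h1 h2
        have e1 := heval l h1 (by omega)
        have e2 := heval (l + 1) (by omega) (by omega)
        have hile : i ≤ p l := by rw [← hp0]; exact hmono' 0 l (by omega) (by omega)
        rw [← seg_append w hile (le_of_lt (hmono l (by omega))),
          DFA.evalFrom_of_append, e1] at e2
        exact e2
      · have e1 := heval (n + 1) (by omega) le_rfl
        have hile : i ≤ p (n + 1) := by
          rw [← hp0]; exact hmono' 0 (n + 1) (by omega) (by omega)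
        have hjle : p (n + 1) ≤ j := by
          rw [← hplast (n + 2) le_rfl]; exact hmono' (n + 1) (n + 2) (by omega) le_rfl
        rw [hplast (n + 2) le_rfl]
        rw [← seg_append w hile hjle, DFA.evalFrom_of_append, e1] at hacc
        exact hacc
    -- infinite pigeonhole: one q works for infinitely many n, hence all n
    choose f hf using key
    obtain ⟨q, hqinf⟩ := Finite.exists_infinite_fiber f
    refine ⟨q, fun n => ?_⟩
    have : Set.Infinite (f ⁻¹' {q}) := Set.infinite_coe_iff.mp hqinf
    obtain ⟨N, hN, hnN⟩ := this.exists_gt n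
    have hfN : f N = q := hN
    obtain ⟨p, hmono, hstart, hloop, hacc⟩ := hf N
    rw [hfN] at hstart hloop hacc
    -- restrict from N down to n
    set p' : ℕ → ℕ := fun l =>
      if l ≤ n then p l else if l = n + 1 then p (N + 1) else p (N + 2) with hp'
    have hpa : ∀ l, l ≤ n → p' l = p l := fun l hl => if_pos hl
    have hpb : p' (n + 1) = p (N + 1) := by
      simp [hp']
    have hpc : p' (n + 2) = p (N + 2) := by
      simp [hp']
    have hloops : ∀ a b, 1 ≤ a → a ≤ b → b ≤ N + 1 →
        M.evalFrom q (seg w (p a) (p b)) = q := by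
      intro a b h1 h2 h3
      exact eval_loops M w q p (fun l hl hlb => hmono l (by omega))
        (fun l hl hlb => hloop l (by omega) (by omega)) h2
    refine ⟨p', ?_, ?_, ?_, ?_⟩
    · intro l hl
      rcases Nat.lt_or_ge l n with h1 | h1
      · rw [hpa l (by omega), hpa (l + 1) (by omega)]
        exact hmono l (by omega)
      · rcases Nat.eq_or_lt_of_le h1 with h2 | h2
        · have : l = n := by omega
          subst this
          rw [hpa l le_rfl, hpb]
          have ha := hmono l (by omega)
          have hb : p (l + 1) ≤ p (N + 1) :=
            mono_of_step (fun m hm hmb => hmono m (by omega)) (by omega)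
          omega
        · have : l = n + 1 := by omega
          subst this
          rw [hpb, hpc]
          exact hmono (N + 1) (by omega)
    · rcases Nat.eq_zero_or_pos n with h0 | h0
      · subst h0
        rw [hpa 0 le_rfl, hpb]
        have hmid : M.evalFrom q (seg w (p 1) (p (N + 1))) = q :=
          hloops 1 (N + 1) le_rfl (by omega) le_rfl
        have h01 : p 0 ≤ p 1 := le_of_lt (hmono 0 (by omega))
        have h1N : p 1 ≤ p (N + 1) :=
          mono_of_step (fun l hl hlb => hmono l (by omega)) (by omega)
        rw [← seg_append w h01 h1N, DFA.evalFrom_of_append, hstart, hmid]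
      · rw [hpa 0 (by omega), hpa 1 h0]
        exact hstart
    · intro l h1 h2
      rcases Nat.lt_or_ge l n with hln | hln
      · rw [hpa l (by omega), hpa (l + 1) (by omega)]
        exact hloop l h1 (by omega)
      · have : l = n := by omega
        subst this
        rw [hpa l le_rfl, hpb]
        exact hloops l (N + 1) h1 (by omega) le_rfl
    · rw [hpb, hpc]
      exact hacc
  · rintro ⟨q, hq⟩ k
    obtain ⟨p, hmono, hstart, hloop, hacc⟩ := hq k
    refine ⟨p 0, p (k + 2), ?_, ?_⟩
    · have : ∀ l, l ≤ k + 2 → p 0 + l ≤ p l := by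
        intro l hl
        induction l with
        | zero => omega
        | succ m ih =>
          have := hmono m (by omega)
          have := ih (by omega)
          omega
      have := this (k + 2) le_rfl
      omega
    · have hq1 : M.evalFrom q (seg w (p 1) (p (k + 1))) = q :=
        eval_loops M w q p (fun l hl hlb => hmono l (by omega))
          (fun l hl hlb => hloop l hl (by omega)) (by omega)
      have h01 : p 0 ≤ p 1 := le_of_lt (hmono 0 (by omega))
      have h1k : p 1 ≤ p (k + 1) :=
        mono_of_step (fun l hl hlb => hmono l (by omega)) (by omega)
      have hk2 : p (k + 1) ≤ p (k + 2) := le_of_lt (hmono (k + 1) (by omega))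
      rw [← seg_append w (h01.trans h1k) hk2, ← seg_append w h01 h1k,
        DFA.evalFrom_of_append, DFA.evalFrom_of_append, hstart, hq1]
      exact hacc
end
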